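/- arXiv:2212.00705 — 2 statements merged into one kernel-verified Lean document; each statement's English description precedes it below -/
import Mathlib

section
/- Let Q ⊂ ℝⁿ be a bounded domain and η : Q̄ → ℝⁿ a C¹ map with det ∇η > 0. If the Ciarlet–Nečas condition holds, i.e. ℒⁿ(η(Q)) = ∫_Q det ∇η dx, then η is injective almost everywhere: the set of points x ∈ Q such that η⁻¹(η(x)) ≠ {x} has Lebesgue measure zero in Q. -/
/-!
Cover `Q` by countably many disjoint measurable pieces `Aₙ` on which `η` is injective (inverse
function theorem plus Lindelöf). On each piece the change of variables formula gives
`ℒⁿ(η(Aₙ)) = ∫_{Aₙ} det ∇η`, so the Ciarlet–Nečas condition says that `ℒⁿ(⋃ η(Aₙ))` equals the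
finite sum `∑ ℒⁿ(η(Aₙ))`: the images overlap only in null sets. A point `x ∈ Aᵢ` sharing its
image with some `y ∈ Aⱼ`, `j ≠ i`, is mapped into `η(Aᵢ) ∩ η(Aⱼ)`, and since `η` is injective
with nonvanishing Jacobian on `Aᵢ`, the preimage in `Aᵢ` of a null set is null.
-/

open MeasureTheory Set Filter Topology Function

theorem HasStrictFDerivAt.exists_mem_nhds_injOn {𝕜 E F : Type*} [NontriviallyNormedField 𝕜]
    [NormedAddCommGroup E] [NormedSpace 𝕜 E] [CompleteSpace E]
    [NormedAddCommGroup F] [NormedSpace 𝕜 F] {f : E → F} {f' : E ≃L[𝕜] F} {a : E}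
    (hf : HasStrictFDerivAt f (f' : E →L[𝕜] F) a) : ∃ U ∈ 𝓝 a, InjOn f U :=
  ⟨_, (hf.toOpenPartialHomeomorph f).open_source.mem_nhds hf.mem_toOpenPartialHomeomorph_source,
    (hf.toOpenPartialHomeomorph f).injOn⟩

theorem ContDiffAt.exists_mem_nhds_injOn_of_det_ne_zero {E : Type*} [NormedAddCommGroup E]
    [NormedSpace ℝ E] [FiniteDimensional ℝ E] {f : E → E} {a : E} (hf : ContDiffAt ℝ 1 f a)
    (hdet : (fderiv ℝ f a).det ≠ 0) : ∃ U ∈ 𝓝 a, InjOn f U := by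
  have hstrict : HasStrictFDerivAt f
      ((fderiv ℝ f a).toContinuousLinearEquivOfDetNeZero hdet : E →L[ℝ] E) a := by
    rw [ContinuousLinearMap.coe_toContinuousLinearEquivOfDetNeZero]
    exact hf.hasStrictFDerivAt one_ne_zero
  exact hstrict.exists_mem_nhds_injOn

theorem IsOpen.exists_pairwise_disjoint_injOn_cover {X Y : Type*} [TopologicalSpace X]
    [SecondCountableTopology X] [MeasurableSpace X] [OpensMeasurableSpace X] {f : X → Y}
    {s : Set X} (hs : IsOpen s) (hf : ∀ x ∈ s, ∃ U ∈ 𝓝 x, InjOn f U) :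
    ∃ A : ℕ → Set X, (∀ n, MeasurableSet (A n)) ∧ Pairwise (Disjoint on A) ∧
      (∀ n, InjOn f (A n)) ∧ ⋃ n, A n = s := by
  let ι := {U : Set X // IsOpen U ∧ U ⊆ s ∧ InjOn f U}
  have : Nonempty ι := ⟨⟨∅, isOpen_empty, empty_subset _, injOn_empty f⟩⟩
  have hcover : ⋃ U : ι, U.1 = s := by
    refine subset_antisymm (iUnion_subset fun U => U.2.2.1) fun x hx => ?_
    obtain ⟨U, hU, hinj⟩ := hf x hx
    exact mem_iUnion.2 ⟨⟨interior U ∩ s, isOpen_interior.inter hs, inter_subset_right,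
      hinj.mono (interior_subset.trans' inter_subset_left)⟩, mem_interior_iff_mem_nhds.2 hU, hx⟩
  obtain ⟨k, hk⟩ := eq_open_union_nat (fun U : ι => U.1) fun U => U.2.1
  refine ⟨disjointed fun n => (k n).1, .disjointed fun n => (k n).2.1.measurableSet,
    disjoint_disjointed _, fun n => (k n).2.2.2.mono (disjointed_subset _ n), ?_⟩
  rw [iUnion_disjointed, hk, hcover]

namespace MeasureTheory

theorem pairwise_aedisjoint_of_measure_iUnion_eq_tsum {α : Type*}
    [MeasurableSpace α] {μ : Measure α} {s : ℕ → Set α} (hs : ∀ n, NullMeasurableSet (s n) μ)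
    (hsum : μ (⋃ n, s n) = ∑' n, μ (s n)) (hfin : μ (⋃ n, s n) ≠ ⊤) :
    Pairwise (AEDisjoint μ on s) := by
  intro i j hij
  let others := ⋃ (k) (_ : k ≠ i), s k
  have hunion : s i ∪ others = ⋃ n, s n := by
    refine subset_antisymm (union_subset (subset_iUnion s i) (iUnion₂_subset fun k _ =>
      subset_iUnion s k)) (iUnion_subset fun k => ?_)
    by_cases hk : k = i
    · exact hk ▸ subset_union_left
    · exact fun x hx => Or.inr (mem_iUnion₂.2 ⟨k, hk, hx⟩)
  have hothers : μ others ≤ ∑' k, if k = i then 0 else μ (s k) :=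
    (measure_iUnion_le _).trans <| ENNReal.tsum_le_tsum fun k => by
      by_cases hk : k = i <;> simp [hk]
  have hnull : μ (s i ∩ others) = 0 := by
    refine nonpos_iff_eq_zero.1 <| (ENNReal.add_le_add_iff_left (hunion ▸ hfin)).1 ?_
    calc μ (s i ∪ others) + μ (s i ∩ others) = μ (s i) + μ others :=
          measure_union_add_inter₀' (hs i) _
      _ ≤ μ (s i) + ∑' k, if k = i then 0 else μ (s k) := by gcongr
      _ = μ (s i ∪ others) + 0 := by
        rw [hunion, add_zero, hsum]
        exact (ENNReal.summable.tsum_eq_add_tsum_ite' (f := fun n => μ (s n)) i).symm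
  exact measure_mono_null (inter_subset_inter_right _ <|
    fun x hx => mem_iUnion₂.2 ⟨j, hij.symm, hx⟩) hnull

variable {E : Type*} [NormedAddCommGroup E] [NormedSpace ℝ E] [FiniteDimensional ℝ E]
  [MeasurableSpace E] [BorelSpace E] (μ : Measure E) [μ.IsAddHaarMeasure]

theorem addHaar_eq_zero_of_addHaar_image_eq_zero {f : E → E} {f' : E → E →L[ℝ] E} {s : Set E}
    (hs : MeasurableSet s) (hf' : ∀ x ∈ s, HasFDerivWithinAt f (f' x) s x) (hf : InjOn f s)
    (hdet : ∀ x ∈ s, (f' x).det ≠ 0) (himage : μ (f '' s) = 0) : μ s = 0 := by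
  have hint : ∫⁻ x in s, ENNReal.ofReal |(f' x).det| ∂μ = 0 := by
    rw [lintegral_abs_det_fderiv_eq_addHaar_image μ hs hf' hf, himage]
  rw [lintegral_eq_zero_iff' (aemeasurable_ofReal_abs_det_fderivWithin μ hs hf')] at hint
  have hfalse : ∀ᵐ x ∂μ.restrict s, False := by
    filter_upwards [hint, ae_restrict_mem hs] with x hx hxs
    simp only [Pi.zero_apply, ENNReal.ofReal_eq_zero, abs_nonpos_iff] at hx
    exact hdet x hxs hx
  rwa [eventually_false_iff_eq_bot, ae_eq_bot, Measure.restrict_eq_zero] at hfalse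

theorem addHaar_setOf_exists_ne_eq_eq_zero {f : E → E} (hf : Differentiable ℝ f) {s : Set E}
    {A : ℕ → Set E} (hA : ∀ n, MeasurableSet (A n)) (hdisj : Pairwise (Disjoint on A))
    (hinj : ∀ n, InjOn f (A n)) (hAs : ⋃ n, A n = s) (hdet : ∀ x ∈ s, (fderiv ℝ f x).det ≠ 0)
    (hCN : μ (f '' s) = ∫⁻ x in s, ENNReal.ofReal |(fderiv ℝ f x).det| ∂μ)
    (hfin : μ (f '' s) ≠ ⊤) :
    μ {x | x ∈ s ∧ ∃ y ∈ s, f y = f x ∧ y ≠ x} = 0 := by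
  have hf' : ∀ t, ∀ x ∈ t, HasFDerivWithinAt f (fderiv ℝ f x) t x := fun _ x _ =>
    (hf x).hasFDerivAt.hasFDerivWithinAt
  have hF : ∀ n, MeasurableSet (f '' A n) := fun n =>
    (hA n).image_of_continuousOn_injOn hf.continuous.continuousOn (hinj n)
  have hsum : μ (⋃ n, f '' A n) = ∑' n, μ (f '' A n) := by
    rw [← image_iUnion, hAs, hCN, ← hAs, lintegral_iUnion hA hdisj]
    exact tsum_congr fun n => lintegral_abs_det_fderiv_eq_addHaar_image μ (hA n) (hf' _) (hinj n)
  have hoverlap := pairwise_aedisjoint_of_measure_iUnion_eq_tsum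
    (fun n => (hF n).nullMeasurableSet) hsum (by rwa [← image_iUnion, hAs])
  have hsub : {x | x ∈ s ∧ ∃ y ∈ s, f y = f x ∧ y ≠ x} ⊆
      ⋃ (i) (j) (_ : i ≠ j), A i ∩ f ⁻¹' (f '' A j) := by
    rintro x ⟨hx, y, hy, hxy, hne⟩
    obtain ⟨i, hxi⟩ := mem_iUnion.1 (hAs ▸ hx)
    obtain ⟨j, hyj⟩ := mem_iUnion.1 (hAs ▸ hy)
    have hij : i ≠ j := by
      rintro rfl
      exact hne (hinj i hyj hxi hxy)
    exact mem_iUnion₂.2 ⟨i, j, mem_iUnion.2 ⟨hij, hxi, y, hyj, hxy⟩⟩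
  refine measure_mono_null hsub <| measure_iUnion_null fun i => measure_iUnion_null fun j =>
    measure_iUnion_null fun hij => ?_
  have hpiece := (hA i).inter ((hF j).preimage hf.continuous.measurable)
  refine addHaar_eq_zero_of_addHaar_image_eq_zero μ hpiece (hf' _)
    ((hinj i).mono inter_subset_left) (fun x hx => hdet x (hAs ▸ mem_iUnion_of_mem i hx.1)) ?_
  refine measure_mono_null ?_ (hoverlap hij)
  rintro _ ⟨x, ⟨hxi, hxj⟩, rfl⟩
  exact ⟨mem_image_of_mem f hxi, hxj⟩

end MeasureTheory

/-- The Ciarlet–Nečas condition implies almost-everywhere injectivity for an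
orientation-preserving `C¹` deformation of a bounded domain. -/
theorem stmt8 {d : ℕ} (Q : Set (EuclideanSpace ℝ (Fin d)))
    (hQopen : IsOpen Q) (hQbdd : Bornology.IsBounded Q)
    (η : EuclideanSpace ℝ (Fin d) → EuclideanSpace ℝ (Fin d))
    (hη : ContDiff ℝ 1 η)
    (hdet : ∀ x ∈ closure Q, 0 < (fderiv ℝ η x).det)
    (hCN : volume (η '' Q) = ∫⁻ x in Q, ENNReal.ofReal ((fderiv ℝ η x).det)) :
    volume {x | x ∈ Q ∧ ∃ y ∈ Q, η y = η x ∧ y ≠ x} = 0 := by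
  have hpos : ∀ x ∈ Q, 0 < (fderiv ℝ η x).det := fun x hx => hdet x (subset_closure hx)
  obtain ⟨A, hA, hdisj, hinj, hAQ⟩ := hQopen.exists_pairwise_disjoint_injOn_cover fun x hx =>
    hη.contDiffAt.exists_mem_nhds_injOn_of_det_ne_zero (hpos x hx).ne'
  have hCN' : volume (η '' Q) = ∫⁻ x in Q, ENNReal.ofReal |(fderiv ℝ η x).det| := by
    rw [hCN]
    exact setLIntegral_congr_fun hQopen.measurableSet fun x hx => by rw [abs_of_pos (hpos x hx)]
  have hfin : volume (η '' Q) ≠ ⊤ :=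
    measure_ne_top_of_subset (image_mono subset_closure)
      (hQbdd.isCompact_closure.image hη.continuous).measure_lt_top.ne
  exact addHaar_setOf_exists_ne_eq_eq_zero volume (hη.differentiable one_ne_zero) hA hdisj hinj
    hAQ (fun x hx => (hpos x hx).ne') hCN' hfin
end

section
/- Separating-hyperplane extraction of a contact force: Let Z be a Banach space, ℓ ∈ Z*, K a compact metric space, and N : Z → C(K) a bounded linear map. Define M⁺ = {(s, w) ∈ ℝ × C(K) : ∃φ ∈ Z, ℓ⟨φ⟩ ≤ s and N(φ) ≥ w pointwise on K} and M⁻ = {(s,w) : s ≤ 0, w ≥ 0}. Assume M⁺ ∩ int M⁻ = ∅ and that there exists φ₀ ∈ Z with N(φ₀) ≥ 1/2 pointwise on K. Then there exist λ < 0 and a nonnegative Radon measure σ₀ ∈ M⁺(K) such that λ ℓ⟨φ⟩ + ∫_K N(φ) dσ₀ = 0 for all φ ∈ Z, and ‖σ₀‖_{M(K)} ≤ −2λ ℓ⟨φ₀⟩. -/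
open MeasureTheory Filter Topology CompactlySupported

/-!
The separation hypothesis says that `ℓ φ ≥ 0` whenever `N φ > 0`, hence, perturbing by `φ₀`,
whenever `N φ ≥ 0`. So `N φ ↦ ℓ φ` is a well-defined positive functional on the range of `N`,
which contains the order unit `N φ₀`; by M. Riesz's extension theorem it extends to a positive
functional `g` on `C(K)`, and Riesz–Markov–Kakutani represents `g` by a finite measure `σ₀`.
With `λ = -1`, the mass bound is `σ₀ K = g 1 ≤ g (N (2 φ₀)) = 2 ℓ φ₀`.
-/

theorem nonneg_of_forall_pos_imp_nonneg {Z K : Type*} [AddCommGroup Z] [Module ℝ Z]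
    [TopologicalSpace K] (ℓ : Z →ₗ[ℝ] ℝ) (N : Z →ₗ[ℝ] C(K, ℝ))
    (h : ∀ φ, (∀ x, 0 < N φ x) → 0 ≤ ℓ φ) {φ₀ : Z} (hφ₀ : ∀ x, 0 < N φ₀ x)
    {φ : Z} (hφ : 0 ≤ N φ) : 0 ≤ ℓ φ := by
  have hlim : Tendsto (fun ε : ℝ => ℓ φ + ε * ℓ φ₀) (𝓝[>] 0) (𝓝 (ℓ φ)) := by
    have : Continuous (fun ε : ℝ => ℓ φ + ε * ℓ φ₀) := by fun_prop
    simpa using (this.tendsto 0).mono_left nhdsWithin_le_nhds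
  refine ge_of_tendsto hlim (eventually_nhdsWithin_of_forall fun ε (hε : 0 < ε) => ?_)
  have := h (φ + ε • φ₀) fun x => by
    simpa using add_pos_of_nonneg_of_pos (hφ x) (mul_pos hε (hφ₀ x))
  simpa using this

theorem ContinuousMap.exists_smul_add_nonneg {K : Type*} [TopologicalSpace K] [CompactSpace K]
    {u : C(K, ℝ)} {c : ℝ} (hc : 0 < c) (hu : ∀ x, c ≤ u x) (y : C(K, ℝ)) :
    ∃ t : ℝ, 0 ≤ t • u + y := by
  refine ⟨‖y‖ / c, ContinuousMap.le_def.mpr fun x => ?_⟩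
  have hy : -y x ≤ ‖y‖ := (neg_le_abs _).trans (y.norm_coe_le_norm x)
  have hyu : ‖y‖ ≤ ‖y‖ / c * u x := by
    calc ‖y‖ = ‖y‖ / c * c := by field_simp
      _ ≤ ‖y‖ / c * u x := by gcongr; exact hu x
  simp only [ContinuousMap.zero_apply, ContinuousMap.add_apply, ContinuousMap.smul_apply,
    smul_eq_mul]
  linarith

theorem LinearMap.exists_positiveLinearMap_comp_eq {Z E : Type*} [AddCommGroup Z] [Module ℝ Z]
    [AddCommGroup E] [PartialOrder E] [IsOrderedAddMonoid E] [Module ℝ E] [PosSMulMono ℝ E]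
    (N : Z →ₗ[ℝ] E) (ℓ : Z →ₗ[ℝ] ℝ) (hpos : ∀ φ, 0 ≤ N φ → 0 ≤ ℓ φ)
    (hcofinal : ∀ y, ∃ φ, 0 ≤ N φ + y) :
    ∃ g : E →ₚ[ℝ] ℝ, ∀ φ, g (N φ) = ℓ φ := by
  have hker : LinearMap.ker N ≤ LinearMap.ker ℓ := fun φ hφ => by
    rw [LinearMap.mem_ker] at hφ ⊢
    have h₁ := hpos φ hφ.ge
    have h₂ := hpos (-φ) (by simp [hφ])
    simp only [map_neg, Left.nonneg_neg_iff] at h₂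
    exact le_antisymm h₂ h₁
  let f : LinearMap.range N →ₗ[ℝ] ℝ :=
    (LinearMap.ker N).liftQ ℓ hker ∘ₗ N.quotKerEquivRange.symm.toLinearMap
  have hf : ∀ φ, f ⟨N φ, LinearMap.mem_range_self N φ⟩ = ℓ φ := fun φ => by
    simp [f, LinearMap.quotKerEquivRange_symm_apply_image]
  obtain ⟨g, hgf, hg⟩ := riesz_extension (PointedCone.positive ℝ E) ⟨_, f⟩
    (by rintro ⟨_, φ, rfl⟩ hφ; exact (hf φ).ge.trans' (hpos φ hφ))
    (fun y => by
      obtain ⟨φ, hφ⟩ := hcofinal y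
      exact ⟨⟨N φ, LinearMap.mem_range_self N φ⟩, hφ⟩)
  exact ⟨.mk₀ g hg, fun φ => (hgf ⟨N φ, LinearMap.mem_range_self N φ⟩).trans (hf φ)⟩

theorem ContinuousMap.exists_isFiniteMeasure_integral_eq {K : Type*} [TopologicalSpace K]
    [T2Space K] [CompactSpace K] [MeasurableSpace K] [BorelSpace K] (Λ : C(K, ℝ) →ₚ[ℝ] ℝ) :
    ∃ μ : Measure K, IsFiniteMeasure μ ∧ ∀ f : C(K, ℝ), ∫ x, f x ∂μ = Λ f := by
  let Λc : C_c(K, ℝ) →ₚ[ℝ] ℝ :=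
    { toFun f := Λ f.toContinuousMap
      map_add' f g := map_add Λ _ _
      map_smul' c f := map_smul Λ c _
      monotone' f g hfg := Λ.monotone' hfg }
  exact ⟨RealRMK.rieszMeasure Λc, inferInstance, fun f =>
    RealRMK.integral_rieszMeasure Λc (CompactlySupportedContinuousMap.continuousMapEquiv f)⟩

/-- Separating-hyperplane extraction of a contact force: if the convex set `M⁺` built
from `ℓ` and `N` does not meet the interior of `M⁻ = (-∞,0] × {w ≥ 0}`, and some `φ₀`
satisfies `N(φ₀) ≥ 1/2` pointwise, then there exist `λ < 0` and a nonnegative finite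
Radon measure `σ₀` with `λ ℓ⟨φ⟩ + ∫_K N(φ) dσ₀ = 0` for all `φ`, and
`‖σ₀‖ ≤ -2λ ℓ⟨φ₀⟩`. -/
theorem stmt17 {Z : Type*} [NormedAddCommGroup Z] [NormedSpace ℝ Z]
    {K : Type*} [MetricSpace K] [CompactSpace K] [MeasurableSpace K] [BorelSpace K]
    (ℓ : Z →L[ℝ] ℝ) (N : Z →L[ℝ] C(K, ℝ)) (φ₀ : Z)
    (hsep : ∀ (s : ℝ) (w : C(K, ℝ)) (φ : Z), ℓ φ ≤ s → (∀ x, w x ≤ N φ x) →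
      ¬(s < 0 ∧ ∀ x, 0 < w x))
    (hφ₀ : ∀ x, (1 : ℝ) / 2 ≤ N φ₀ x) :
    ∃ (lam : ℝ) (σ₀ : Measure K), lam < 0 ∧ IsFiniteMeasure σ₀ ∧
      (∀ φ : Z, lam * ℓ φ + ∫ x, N φ x ∂σ₀ = 0) ∧
      (σ₀ Set.univ).toReal ≤ -(2 * lam) * ℓ φ₀ := by
  have hpos : ∀ φ, 0 ≤ N φ → 0 ≤ ℓ φ := fun φ =>
    nonneg_of_forall_pos_imp_nonneg ℓ.toLinearMap N.toLinearMap
      (fun φ hφ => not_lt.mp fun hneg => hsep _ (N φ) φ le_rfl (fun _ => le_rfl) ⟨hneg, hφ⟩)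
      (fun x => one_half_pos.trans_le (hφ₀ x))
  have hcofinal : ∀ y, ∃ φ, 0 ≤ N φ + y := fun y => by
    obtain ⟨t, ht⟩ := ContinuousMap.exists_smul_add_nonneg one_half_pos hφ₀ y
    exact ⟨t • φ₀, by simpa using ht⟩
  obtain ⟨g, hg⟩ := N.toLinearMap.exists_positiveLinearMap_comp_eq ℓ.toLinearMap hpos hcofinal
  replace hg : ∀ φ, g (N φ) = ℓ φ := hg
  obtain ⟨σ, hσ, hσg⟩ := ContinuousMap.exists_isFiniteMeasure_integral_eq g
  refine ⟨-1, σ, by norm_num, hσ, fun φ => by simp [hσg, hg], ?_⟩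
  have hle : (1 : C(K, ℝ)) ≤ N ((2 : ℝ) • φ₀) := ContinuousMap.le_def.mpr fun x => by
    simp only [map_smul, ContinuousMap.smul_apply, smul_eq_mul, ContinuousMap.one_apply]
    linarith [hφ₀ x]
  calc (σ Set.univ).toReal = g 1 := by simpa [measureReal_def] using hσg 1
    _ ≤ g (N ((2 : ℝ) • φ₀)) := g.monotone' hle
    _ = -(2 * -1) * ℓ φ₀ := by simp [hg]
end
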